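/- arXiv:2205.08665 — 2 statements merged into one kernel-verified Lean document; each statement's English description precedes it below -/
import Mathlib

section
/- For every spin configuration s and every edge configuration w on a finite simple graph G, the unnormalized Gibbs weight times the Swendsen–Wang edge-step probability equals e^{β|E(G)|} times the unnormalized joint vertex–edge weight: W_V(s) · P(s,w) = e^{β·|E(G)|} · W_VE(s,w). -/
open Classical

noncomputable section

variable {V : Type*} [Fintype V] [DecidableEq V]

/-- Product `s i * s j` of spins over an unordered edge `{i, j}`. -/
def pairProd (s : V → ℝ) : Sym2 V → ℝ :=
  Sym2.lift ⟨fun i j => s i * s j, fun _ _ => mul_comm _ _⟩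

/-- Unnormalized Gibbs weight
`W_V(s) = exp (β Σ_{{i,j} ∈ E} s_i s_j + β Σ_i h_i s_i)`. -/
def WV (G : SimpleGraph V) [DecidableRel G.Adj] (β : ℝ) (h : V → ℝ) (s : V → ℝ) : ℝ :=
  Real.exp (β * ∑ e ∈ G.edgeFinset, pairProd s e + β * ∑ i : V, h i * s i)

/-- Edge factor of the joint vertex-edge weight:
`(1 - e^{-2β})` if `w_{ij} = 1` and `s_i = s_j`, `e^{-2β}` if `w_{ij} = 0`, else `0`. -/
def edgeFactorVE (β : ℝ) (s : V → ℝ) (b : Bool) : Sym2 V → ℝ :=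
  Sym2.lift ⟨fun i j =>
    if b then (if s i = s j then 1 - Real.exp (-2 * β) else 0) else Real.exp (-2 * β),
    by intro i j; by_cases hb : b <;> simp [hb, eq_comm]⟩

/-- Unnormalized joint vertex-edge weight `W_VE(s, w)`. -/
def WVE (G : SimpleGraph V) [DecidableRel G.Adj] (β : ℝ) (h : V → ℝ) (s : V → ℝ)
    (w : G.edgeSet → Bool) : ℝ :=
  (∏ e : G.edgeSet, edgeFactorVE β s (w e) e.val) * Real.exp (β * ∑ i : V, h i * s i)

/-- Edge factor of the Swendsen-Wang edge-step probability: if `s_i = s_j` then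
`(1 - e^{-2β})` for `w_{ij} = 1` and `e^{-2β}` for `w_{ij} = 0`; otherwise `0` for
`w_{ij} = 1` and `1` for `w_{ij} = 0`. -/
def edgeFactorP (β : ℝ) (s : V → ℝ) (b : Bool) : Sym2 V → ℝ :=
  Sym2.lift ⟨fun i j =>
    if s i = s j then (if b then 1 - Real.exp (-2 * β) else Real.exp (-2 * β))
    else (if b then 0 else 1),
    by intro i j; simp [eq_comm]⟩

/-- Swendsen-Wang edge-step probability `P(s, w)`. -/
def swP (G : SimpleGraph V) [DecidableRel G.Adj] (β : ℝ) (s : V → ℝ)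
    (w : G.edgeSet → Bool) : ℝ :=
  ∏ e : G.edgeSet, edgeFactorP β s (w e) e.val

/-- Spanning subgraph of `G` whose edges are the edges `e` with `w e = 1`. -/
def openSubgraph (G : SimpleGraph V) [DecidableRel G.Adj] (w : G.edgeSet → Bool) :
    SimpleGraph V where
  Adj i j := ∃ hij : G.Adj i j, w ⟨Sym2.mk i j, G.mem_edgeSet.mpr hij⟩ = true
  symm := ⟨by
    rintro i j ⟨hij, hw⟩
    refine ⟨hij.symm, ?_⟩
    have he : (⟨Sym2.mk j i, G.mem_edgeSet.mpr hij.symm⟩ : G.edgeSet)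
        = ⟨Sym2.mk i j, G.mem_edgeSet.mpr hij⟩ := Subtype.ext (Sym2.eq_swap)
    rw [he]; exact hw⟩
  loopless := ⟨by rintro i ⟨hij, -⟩; exact G.loopless.irrefl i hij⟩

/-- `h_γ = Σ_{i ∈ γ} h_i`: sum of the field over a connected component `γ ∈ C_w`. -/
def hComp (G : SimpleGraph V) [DecidableRel G.Adj] (h : V → ℝ) (w : G.edgeSet → Bool)
    (γ : (openSubgraph G w).ConnectedComponent) : ℝ :=
  ∑ i ∈ Finset.univ.filter (fun i => (openSubgraph G w).connectedComponentMk i = γ), h i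

/-- A configuration is compatible with the edge configuration `w` if it is constant on each
connected component of the subgraph of open edges. -/
def Compatible (G : SimpleGraph V) [DecidableRel G.Adj] (w : G.edgeSet → Bool)
    (t : V → ℝ) : Prop :=
  ∀ i j : V, (openSubgraph G w).connectedComponentMk i = (openSubgraph G w).connectedComponentMk j
    → t i = t j

/-- Swendsen-Wang spin-step probability `Q(w, t)`: for `t` compatible with `w`, the product
over components `γ ∈ C_w` of `e^{β h_γ τ_γ} / (e^{β h_γ} + e^{-β h_γ})`, where
`τ_γ = t γ.out` is the common value of `t` on `γ`; and `0` for incompatible `t`. -/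
def swQ (G : SimpleGraph V) [DecidableRel G.Adj] (β : ℝ) (h : V → ℝ) (w : G.edgeSet → Bool)
    (t : V → ℝ) : ℝ :=
  if Compatible G w t then
    ∏ γ : (openSubgraph G w).ConnectedComponent,
      Real.exp (β * hComp G h w γ * t γ.out) /
        (Real.exp (β * hComp G h w γ) + Real.exp (-(β * hComp G h w γ)))
  else 0

/-- Unnormalized edge weight
`W_E(w) = Π_{w_e = 1} (1 - e^{-2β}) · Π_{w_e = 0} e^{-2β} · Π_{γ ∈ C_w} (e^{β h_γ} + e^{-β h_γ})`. -/
def WE (G : SimpleGraph V) [DecidableRel G.Adj] (β : ℝ) (h : V → ℝ)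
    (w : G.edgeSet → Bool) : ℝ :=
  (∏ _e ∈ Finset.univ.filter (fun e : G.edgeSet => w e = true), (1 - Real.exp (-2 * β))) *
  (∏ _e ∈ Finset.univ.filter (fun e : G.edgeSet => w e = false), Real.exp (-2 * β)) *
  ∏ γ : (openSubgraph G w).ConnectedComponent,
    (Real.exp (β * hComp G h w γ) + Real.exp (-(β * hComp G h w γ)))

omit [Fintype V] [DecidableEq V] in
theorem spin_mul_eq_ite {x y : ℝ} (hx : x = 1 ∨ x = -1) (hy : y = 1 ∨ y = -1) :
    x * y = if x = y then 1 else -1 := by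
  rcases hx with rfl | rfl <;> rcases hy with rfl | rfl <;> norm_num

omit [Fintype V] [DecidableEq V] in
/-- Equal spins: `e^{β s_i s_j} = e^β`; unequal spins: `e^{β s_i s_j} = e^{-β} = e^β e^{-2β}`. -/
theorem exp_mul_pairProd_mul_edgeFactorP (β : ℝ) {s : V → ℝ} (hs : ∀ i, s i = 1 ∨ s i = -1)
    (b : Bool) (e : Sym2 V) :
    Real.exp (β * pairProd s e) * edgeFactorP β s b e = Real.exp β * edgeFactorVE β s b e := by
  induction e using Sym2.ind with
  | _ i j =>
    simp only [pairProd, edgeFactorP, edgeFactorVE, Sym2.lift_mk, spin_mul_eq_ite (hs i) (hs j)]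
    by_cases hij : s i = s j <;> cases b <;> simp [hij, ← Real.exp_add]
    ring_nf

omit [DecidableEq V] in
theorem WV_eq_prod_mul (G : SimpleGraph V) [DecidableRel G.Adj] (β : ℝ) (h s : V → ℝ) :
    WV G β h s =
      (∏ e : G.edgeSet, Real.exp (β * pairProd s e)) * Real.exp (β * ∑ i : V, h i * s i) := by
  rw [WV, Real.exp_add, Finset.sum_subtype G.edgeFinset (fun _ => G.mem_edgeFinset),
    Finset.mul_sum, Real.exp_sum]

omit [DecidableEq V] in
theorem exp_mul_card_edgeFinset (G : SimpleGraph V) [DecidableRel G.Adj] (β : ℝ) :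
    Real.exp (β * G.edgeFinset.card) = ∏ _e : G.edgeSet, Real.exp β := by
  rw [Finset.prod_const, ← Real.exp_nat_mul, Finset.card_univ, G.edgeFinset_card, mul_comm]

theorem WV_mul_swP_general (G : SimpleGraph V) [DecidableRel G.Adj]
    (β : ℝ) (h : V → ℝ)
    (s : V → ℝ) (hs : ∀ i, s i = 1 ∨ s i = -1) (w : G.edgeSet → Bool) :
    WV G β h s * swP G β s w = Real.exp (β * G.edgeFinset.card) * WVE G β h s w := by
  have hedges : (∏ e : G.edgeSet, Real.exp (β * pairProd s e)) * swP G β s w =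
      Real.exp (β * G.edgeFinset.card) * ∏ e : G.edgeSet, edgeFactorVE β s (w e) e := by
    rw [swP, exp_mul_card_edgeFinset, ← Finset.prod_mul_distrib, ← Finset.prod_mul_distrib]
    exact Finset.prod_congr rfl fun e _ => exp_mul_pairProd_mul_edgeFactorP β hs (w e) e
  rw [WV_eq_prod_mul, WVE, mul_right_comm, hedges, mul_assoc]

/-- For every spin configuration `s` and edge configuration `w`,
`W_V(s) · P(s, w) = e^{β |E(G)|} · W_VE(s, w)`. -/
theorem WV_mul_swP (G : SimpleGraph V) [DecidableRel G.Adj]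
    (β : ℝ) (hβ : 0 < β) (h : V → ℝ)
    (s : V → ℝ) (hs : ∀ i, s i = 1 ∨ s i = -1) (w : G.edgeSet → Bool) :
    WV G β h s * swP G β s w = Real.exp (β * G.edgeFinset.card) * WVE G β h s w :=
  WV_mul_swP_general G β h s hs w

end
end

section
/- Let w be an edge configuration on a finite simple graph G, and let s and t be spin configurations both compatible with w (i.e., w_e = 1 implies the endpoints of e carry equal spins, under s and under t). Then exp(β Σ_{{i,j}∈E(G)} s_i s_j) · P(s,w) = exp(β Σ_{{i,j}∈E(G)} t_i t_j) · P(t,w); that is, this quantity does not depend on the spin configuration. -/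
open Classical

noncomputable section

variable {V : Type*} [Fintype V] [DecidableEq V]

/-- The factor `e^{β s_i s_j} P_{ij}(s, b)` of an edge `{i, j}` with `±1` spins compatible with `b`,
whatever the spins: an open edge joins equal spins, and a closed one gives `e^{β} e^{-2β}` or
`e^{-β} · 1`, both `e^{-β}`. -/
def compatibleEdgeWeight (β : ℝ) (b : Bool) : ℝ :=
  if b then Real.exp β * (1 - Real.exp (-2 * β)) else Real.exp (-β)

theorem exp_mul_mul_ite_eq_compatibleEdgeWeight {β a b : ℝ}
    (ha : a = 1 ∨ a = -1) (hb : b = 1 ∨ b = -1) {c : Bool} (hc : c = true → a = b) :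
    Real.exp (β * (a * b)) *
        (if a = b then (if c then 1 - Real.exp (-2 * β) else Real.exp (-2 * β))
          else (if c then 0 else 1))
      = compatibleEdgeWeight β c := by
  rw [compatibleEdgeWeight]
  by_cases hab : a = b
  · have hprod : a * b = 1 := by rw [← hab]; rcases ha with rfl | rfl <;> norm_num
    rw [hprod, if_pos hab, mul_one]
    cases c
    · simp only [Bool.false_eq_true, if_false, ← Real.exp_add]; ring_nf
    · simp only [if_true]
  · have hprod : a * b = -1 := by
      rcases ha with rfl | rfl <;> rcases hb with rfl | rfl <;> simp_all
    obtain rfl : c = false := by simpa using mt hc hab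
    simp [hab, hprod]

theorem exp_sum_pairProd_mul_swP {W : Type*} [Fintype W] (G : SimpleGraph W)
    [DecidableRel G.Adj] (β : ℝ) (w : G.edgeSet → Bool) (s : W → ℝ) :
    Real.exp (β * ∑ e ∈ G.edgeFinset, pairProd s e) * swP G β s w
      = ∏ e : G.edgeSet, Real.exp (β * pairProd s e) * edgeFactorP β s (w e) e := by
  rw [swP, Finset.prod_mul_distrib, SimpleGraph.edgeFinset, ← Finset.sum_set_coe,
    Finset.mul_sum, Real.exp_sum]

theorem exp_sum_pairProd_mul_swP_of_compatible {W : Type*} [Fintype W] (G : SimpleGraph W)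
    [DecidableRel G.Adj] (β : ℝ) (w : G.edgeSet → Bool) (s : W → ℝ)
    (hs : ∀ i, s i = 1 ∨ s i = -1)
    (hsw : ∀ (i j : W) (hij : G.Adj i j),
      w ⟨Sym2.mk i j, G.mem_edgeSet.mpr hij⟩ = true → s i = s j) :
    Real.exp (β * ∑ e ∈ G.edgeFinset, pairProd s e) * swP G β s w
      = ∏ e : G.edgeSet, compatibleEdgeWeight β (w e) := by
  rw [exp_sum_pairProd_mul_swP]
  refine Finset.prod_congr rfl fun ⟨e, he⟩ _ => ?_
  induction e using Sym2.ind with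
  | _ i j =>
    exact exp_mul_mul_ite_eq_compatibleEdgeWeight (hs i) (hs j) (hsw i j (G.mem_edgeSet.mp he))

theorem exp_mul_swP_spin_independent_general (G : SimpleGraph V) [DecidableRel G.Adj]
    (β : ℝ) (w : G.edgeSet → Bool) (s t : V → ℝ)
    (hs : ∀ i, s i = 1 ∨ s i = -1) (ht : ∀ i, t i = 1 ∨ t i = -1)
    (hsw : ∀ (i j : V) (hij : G.Adj i j),
      w ⟨Sym2.mk i j, G.mem_edgeSet.mpr hij⟩ = true → s i = s j)
    (htw : ∀ (i j : V) (hij : G.Adj i j),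
      w ⟨Sym2.mk i j, G.mem_edgeSet.mpr hij⟩ = true → t i = t j) :
    Real.exp (β * ∑ e ∈ G.edgeFinset, pairProd s e) * swP G β s w
      = Real.exp (β * ∑ e ∈ G.edgeFinset, pairProd t e) * swP G β t w := by
  rw [exp_sum_pairProd_mul_swP_of_compatible G β w s hs hsw,
    exp_sum_pairProd_mul_swP_of_compatible G β w t ht htw]

/-- For an edge configuration `w` and spin configurations `s`, `t` both
compatible with `w` (open edges join equal spins), the quantity
`exp (β Σ_{{i,j} ∈ E} s_i s_j) · P(s, w)` does not depend on the spin configuration. -/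
theorem exp_mul_swP_spin_independent (G : SimpleGraph V) [DecidableRel G.Adj]
    (β : ℝ) (hβ : 0 < β) (w : G.edgeSet → Bool) (s t : V → ℝ)
    (hs : ∀ i, s i = 1 ∨ s i = -1) (ht : ∀ i, t i = 1 ∨ t i = -1)
    (hsw : ∀ (i j : V) (hij : G.Adj i j),
      w ⟨Sym2.mk i j, G.mem_edgeSet.mpr hij⟩ = true → s i = s j)
    (htw : ∀ (i j : V) (hij : G.Adj i j),
      w ⟨Sym2.mk i j, G.mem_edgeSet.mpr hij⟩ = true → t i = t j) :
    Real.exp (β * ∑ e ∈ G.edgeFinset, pairProd s e) * swP G β s w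
      = Real.exp (β * ∑ e ∈ G.edgeFinset, pairProd t e) * swP G β t w :=
  exp_mul_swP_spin_independent_general G β w s t hs ht hsw htw

end
end
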